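/- For every finite simple graph G with vertex set V and any vertex i, the degree of i equals the number of vertices j ≠ i such that the chromatic ideal generators m_i and m_j are coprime (gcd(m_i, m_j) = 1). -/
import Mathlib


/-- A finite set of vertices is independent: no edge has both endpoints in it. -/
def Indep {V : Type*} (G : SimpleGraph V) (s : Finset V) : Prop :=
  ∀ a ∈ s, ∀ b ∈ s, ¬ G.Adj a b

/-- A maximal independent set. -/
def MaxIndep {V : Type*} (G : SimpleGraph V) (s : Finset V) : Prop :=
  Indep G s ∧ ∀ t : Finset V, s ⊂ t → ¬ Indep G t

/-- `Γ`: the index set of the variables of the chromatic ideal `M_G`, consisting of all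
singletons of vertices together with all maximal independent sets. -/
def Gamma {V : Type*} (G : SimpleGraph V) : Set (Finset V) :=
  {ω | (∃ i : V, ω = {i}) ∨ MaxIndep G ω}

/-- The generator `m_i = ∏_{ω ∈ Γ, i ∈ ω} x_ω` of the chromatic ideal `M_G`, a squarefree
monomial identified with its set of variables `{x_ω : ω ∈ Γ, i ∈ ω}`. -/
def gen {V : Type*} (G : SimpleGraph V) (i : V) : Set (Finset V) :=
  {ω ∈ Gamma G | i ∈ ω}

lemma exists_maxIndep_superset {V : Type*} [Fintype V] [DecidableEq V]
    (G : SimpleGraph V) (s : Finset V) (hs : Indep G s) :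
    ∃ t : Finset V, s ⊆ t ∧ MaxIndep G t := by
  classical
  set S : Finset (Finset V) := Finset.univ.filter (fun t => Indep G t ∧ s ⊆ t) with hS
  have hsS : s ∈ S := by simp [hS, hs]
  obtain ⟨t, htS, hmax⟩ := S.exists_max_image Finset.card ⟨s, hsS⟩
  simp only [hS, Finset.mem_filter] at htS
  refine ⟨t, htS.2.2, htS.2.1, ?_⟩
  intro u hsub hu
  have huS : u ∈ S := by
    simp [hS, hu, htS.2.2.trans hsub.subset]
  have := hmax u huS
  have := Finset.card_lt_card hsub
  omega

/-- The degree of a vertex `i` equals the number of vertices `j ≠ i` whose chromatic-ideal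
generator `m_j` is coprime to `m_i` (i.e. `gcd(m_i, m_j) = 1`). -/
theorem degree_eq_card_coprime_generators {V : Type*} [Fintype V] [DecidableEq V]
    (G : SimpleGraph V) [DecidableRel G.Adj] (i : V) :
    G.degree i = Set.ncard {j : V | j ≠ i ∧ gen G i ∩ gen G j = ∅} := by
  classical
  have hset : {j : V | j ≠ i ∧ gen G i ∩ gen G j = ∅} = ↑(G.neighborFinset i) := by
    ext j
    simp only [Set.mem_setOf_eq, Finset.coe_sort_coe, Finset.mem_coe,
      SimpleGraph.mem_neighborFinset]
    constructor
    · rintro ⟨hji, hempty⟩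
      by_contra hadj
      have hindep : Indep G ({i, j} : Finset V) := by
        intro a ha b hb
        simp only [Finset.mem_insert, Finset.mem_singleton] at ha hb
        rcases ha with rfl | rfl <;> rcases hb with rfl | rfl
        · exact G.irrefl
        · exact hadj
        · exact fun h => hadj h.symm
        · exact G.irrefl
      obtain ⟨t, hsub, hmax⟩ := exists_maxIndep_superset G _ hindep
      have hit : i ∈ t := hsub (by simp)
      have hjt : j ∈ t := hsub (by simp)
      have : t ∈ gen G i ∩ gen G j := ⟨⟨Or.inr hmax, hit⟩, ⟨Or.inr hmax, hjt⟩⟩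
      rw [hempty] at this
      exact this
    · intro hadj
      refine ⟨hadj.ne', ?_⟩
      ext ω
      simp only [Set.mem_inter_iff, Set.mem_empty_iff_false, iff_false]
      rintro ⟨⟨hΓ, hiω⟩, ⟨_, hjω⟩⟩
      rcases hΓ with ⟨k, rfl⟩ | hmax
      · simp only [Finset.mem_singleton] at hiω hjω
        exact hadj.ne (hiω.trans hjω.symm)
      · exact hmax.1 i hiω j hjω hadj
  rw [hset, Set.ncard_coe_finset]
  rfl
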